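/- Let X be a locally compact Hausdorff space and let μ be a deficient topological measure on X. The following are equivalent: (a) μ(C ∪ K) ≤ μ(C) + μ(K) for all compact sets C, K; (b) μ(U ∪ V) ≤ μ(U) + μ(V) for all open sets U, V; (c) μ admits a unique extension to a Borel measure m on the Borel σ-algebra of X that is outer regular on all Borel sets and inner regular on open sets, and agrees with μ on open and closed sets. -/

import Mathlib

open Set Classical
open scoped ENNReal NNReal

variable {X : Type*}

/-- A deficient topological measure on a locally compact space `X`: a set function on open
and closed subsets of `X` with values in `[0,∞]`, not identically `∞`, finitely additive on
compact sets, inner compact regular on open sets, and outer regular on closed sets.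
(Values on sets that are neither open nor closed are irrelevant.) -/
def IsDTM [TopologicalSpace X] (ν : Set X → ℝ≥0∞) : Prop :=
  (∃ A : Set X, (IsOpen A ∨ IsClosed A) ∧ ν A ≠ ⊤) ∧
  (∀ C K : Set X, IsCompact C → IsCompact K → Disjoint C K → ν (C ∪ K) = ν C + ν K) ∧
  (∀ U : Set X, IsOpen U → ν U = ⨆ (K : Set X) (_ : IsCompact K ∧ K ⊆ U), ν K) ∧
  (∀ F : Set X, IsClosed F → ν F = ⨅ (U : Set X) (_ : IsOpen U ∧ F ⊆ U), ν U)

open MeasureTheory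

/-!
A compact subset of `U ∪ V` splits into compact pieces inside `U` and `V`, so by inner regularity
subadditivity on compact sets passes to open sets. Given subadditivity on open sets, `μ` is
countably subadditive on open sets, so `λ E = inf {μ U | U open, E ⊆ U}` is an outer measure; it
agrees with `μ` on open and closed sets, and open sets are Carathéodory measurable because
`μ K + μ (V \ K) ≤ μ V` for compact `K ⊆ V`. Conversely, a measure agreeing with `μ` on open and
closed sets makes `μ` subadditive on compact and on open sets, and outer regularity forces any
such measure to be `λ` on Borel sets.
-/

theorem union_le_add_of_measure_eq [MeasurableSpace X] {μ : Set X → ℝ≥0∞} (m : Measure X)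
    {A B : Set X} (hA : m A = μ A) (hB : m B = μ B) (hAB : m (A ∪ B) = μ (A ∪ B)) :
    μ (A ∪ B) ≤ μ A + μ B :=
  hA ▸ hB ▸ hAB ▸ measure_union_le A B

namespace IsDTM

variable [TopologicalSpace X] {μ : Set X → ℝ≥0∞} (hμ : IsDTM μ)
include hμ

theorem union_eq_add_of_disjoint {C K : Set X} (hC : IsCompact C) (hK : IsCompact K)
    (hCK : Disjoint C K) : μ (C ∪ K) = μ C + μ K :=
  hμ.2.1 C K hC hK hCK

theorem eq_iSup_of_isOpen {U : Set X} (hU : IsOpen U) :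
    μ U = ⨆ (K : Set X) (_ : IsCompact K ∧ K ⊆ U), μ K :=
  hμ.2.2.1 U hU

theorem eq_iInf_of_isClosed {F : Set X} (hF : IsClosed F) :
    μ F = ⨅ (U : Set X) (_ : IsOpen U ∧ F ⊆ U), μ U :=
  hμ.2.2.2 F hF

theorem mono_isCompact_isOpen {K U : Set X} (hK : IsCompact K) (hU : IsOpen U) (hKU : K ⊆ U) :
    μ K ≤ μ U := by
  rw [hμ.eq_iSup_of_isOpen hU]
  exact le_iSup₂ (f := fun K (_ : IsCompact K ∧ K ⊆ U) => μ K) K ⟨hK, hKU⟩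

theorem mono_isOpen {U V : Set X} (hU : IsOpen U) (hV : IsOpen V) (hUV : U ⊆ V) :
    μ U ≤ μ V := by
  rw [hμ.eq_iSup_of_isOpen hU]
  exact iSup₂_le fun K hK => hμ.mono_isCompact_isOpen hK.1 hV (hK.2.trans hUV)

theorem empty : μ ∅ = 0 := by
  obtain ⟨A, hA, hAfin⟩ := hμ.1
  have hopen_fin : ∃ W : Set X, IsOpen W ∧ μ W ≠ ⊤ := by
    rcases hA with hA | hA
    · exact ⟨A, hA, hAfin⟩
    · rw [hμ.eq_iInf_of_isClosed hA, ← lt_top_iff_ne_top] at hAfin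
      simp only [iInf_lt_iff] at hAfin
      obtain ⟨W, ⟨hW, -⟩, hWfin⟩ := hAfin
      exact ⟨W, hW, hWfin.ne⟩
  obtain ⟨W, hW, hWfin⟩ := hopen_fin
  have hfin : μ ∅ ≠ ⊤ :=
    ne_top_of_le_ne_top hWfin (hμ.mono_isCompact_isOpen isCompact_empty hW (empty_subset W))
  have hdouble : μ ∅ + μ ∅ = μ ∅ + 0 := by
    simpa using (hμ.union_eq_add_of_disjoint isCompact_empty isCompact_empty
      (disjoint_empty ∅)).symm
  exact (ENNReal.add_right_inj hfin).1 hdouble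

theorem union_le_of_isOpen [T2Space X]
    (hsub : ∀ C K : Set X, IsCompact C → IsCompact K → μ (C ∪ K) ≤ μ C + μ K)
    {U V : Set X} (hU : IsOpen U) (hV : IsOpen V) : μ (U ∪ V) ≤ μ U + μ V := by
  rw [hμ.eq_iSup_of_isOpen (hU.union hV)]
  refine iSup₂_le fun K hK => ?_
  obtain ⟨K₁, K₂, hK₁, hK₂, hK₁U, hK₂V, rfl⟩ := hK.1.binary_compact_cover hU hV hK.2
  exact (hsub K₁ K₂ hK₁ hK₂).trans
    (add_le_add (hμ.mono_isCompact_isOpen hK₁ hU hK₁U) (hμ.mono_isCompact_isOpen hK₂ hV hK₂V))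

theorem add_diff_le [T2Space X] {K V : Set X} (hK : IsCompact K) (hV : IsOpen V)
    (hKV : K ⊆ V) : μ K + μ (V \ K) ≤ μ V := by
  rw [hμ.eq_iSup_of_isOpen (hV.sdiff hK.isClosed),
    ENNReal.add_biSup' (p := fun C => IsCompact C ∧ C ⊆ V \ K)
      ⟨∅, isCompact_empty, empty_subset _⟩ μ]
  refine iSup₂_le fun C ⟨hC, hCV⟩ => ?_
  have hdisj : Disjoint K C := disjoint_left.2 fun x hxK hxC => (hCV hxC).2 hxK
  rw [← hμ.union_eq_add_of_disjoint hK hC hdisj]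
  exact hμ.mono_isCompact_isOpen (hK.union hC) hV (union_subset hKV (hCV.trans sdiff_subset))

noncomputable def outerMeasure : OuterMeasure X :=
  inducedOuterMeasure (fun U (_ : IsOpen U) => μ U) isOpen_empty hμ.empty

variable (hsub : ∀ U V : Set X, IsOpen U → IsOpen V → μ (U ∪ V) ≤ μ U + μ V)
include hsub

theorem biUnion_finset_le {ι : Type*} (t : Finset ι) {U : ι → Set X} (hU : ∀ i, IsOpen (U i)) :
    μ (⋃ i ∈ t, U i) ≤ ∑ i ∈ t, μ (U i) := by
  induction t using Finset.induction_on with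
  | empty => simp [hμ.empty]
  | insert a t ha ih =>
    rw [Finset.set_biUnion_insert, Finset.sum_insert ha]
    exact (hsub _ _ (hU a) (isOpen_biUnion fun i _ => hU i)).trans (add_le_add_right ih _)

theorem iUnion_le_tsum {U : ℕ → Set X} (hU : ∀ n, IsOpen (U n)) :
    μ (⋃ n, U n) ≤ ∑' n, μ (U n) := by
  rw [hμ.eq_iSup_of_isOpen (isOpen_iUnion hU)]
  refine iSup₂_le fun K hK => ?_
  obtain ⟨t, ht⟩ := hK.1.elim_finite_subcover U hU hK.2
  calc μ K ≤ μ (⋃ i ∈ t, U i) :=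
        hμ.mono_isCompact_isOpen hK.1 (isOpen_biUnion fun i _ => hU i) ht
    _ ≤ ∑ i ∈ t, μ (U i) := hμ.biUnion_finset_le hsub t hU
    _ ≤ ∑' i, μ (U i) := ENNReal.sum_le_tsum t

theorem outerMeasure_eq_iInf (E : Set X) :
    hμ.outerMeasure E = ⨅ (U : Set X) (_ : IsOpen U ∧ E ⊆ U), μ U := by
  rw [outerMeasure, inducedOuterMeasure_eq_iInf (fun _ => isOpen_iUnion)
    (fun _ => hμ.iUnion_le_tsum hsub) (fun _ _ => hμ.mono_isOpen)]
  simp only [iInf_and]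

theorem outerMeasure_of_isOpen {U : Set X} (hU : IsOpen U) : hμ.outerMeasure U = μ U :=
  inducedOuterMeasure_eq' (fun _ => isOpen_iUnion) (fun _ => hμ.iUnion_le_tsum hsub)
    (fun _ _ => hμ.mono_isOpen) hU

theorem outerMeasure_of_isOpen_or_isClosed {A : Set X} (hA : IsOpen A ∨ IsClosed A) :
    hμ.outerMeasure A = μ A := by
  rcases hA with hA | hA
  · exact hμ.outerMeasure_of_isOpen hsub hA
  · rw [hμ.outerMeasure_eq_iInf hsub, hμ.eq_iInf_of_isClosed hA]

theorem isCaratheodory_of_isOpen [T2Space X] {U : Set X} (hU : IsOpen U) :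
    MeasurableSet[hμ.outerMeasure.caratheodory] U := by
  -- It suffices to split open `W`: approximate `W ∩ U` from inside by a compact `K`, and
  -- `W \ U ⊆ W \ K`.
  refine (inducedOuterMeasure_caratheodory (fun _ => isOpen_iUnion)
    (fun _ => hμ.iUnion_le_tsum hsub) (fun _ _ => hμ.mono_isOpen) U).2 fun W hW => ?_
  change hμ.outerMeasure (W ∩ U) + hμ.outerMeasure (W \ U) ≤ hμ.outerMeasure W
  rw [hμ.outerMeasure_of_isOpen hsub (hW.inter hU), hμ.outerMeasure_of_isOpen hsub hW,
    hμ.eq_iSup_of_isOpen (hW.inter hU), ENNReal.biSup_add' ⟨∅, isCompact_empty, empty_subset _⟩]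
  refine iSup₂_le fun K ⟨hK, hKWU⟩ => ?_
  have hdiff : hμ.outerMeasure (W \ U) ≤ μ (W \ K) := by
    rw [← hμ.outerMeasure_of_isOpen hsub (hW.sdiff hK.isClosed)]
    exact measure_mono (sdiff_subset_sdiff_right fun x hx => (hKWU hx).2)
  exact (add_le_add_right hdiff _).trans (hμ.add_diff_le hK hW (hKWU.trans inter_subset_left))

variable [T2Space X] [MeasurableSpace X] [BorelSpace X]

theorem borel_le_caratheodory : ‹MeasurableSpace X› ≤ hμ.outerMeasure.caratheodory := by
  rw [BorelSpace.measurable_eq (α := X)]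
  exact MeasurableSpace.generateFrom_le fun _ => hμ.isCaratheodory_of_isOpen hsub

noncomputable def measure : Measure X :=
  hμ.outerMeasure.toMeasure (hμ.borel_le_caratheodory hsub)

theorem measure_apply {E : Set X} (hE : MeasurableSet E) :
    hμ.measure hsub E = ⨅ (U : Set X) (_ : IsOpen U ∧ E ⊆ U), μ U := by
  rw [measure, toMeasure_apply _ _ hE, hμ.outerMeasure_eq_iInf hsub]

theorem measure_of_isOpen_or_isClosed {A : Set X} (hA : IsOpen A ∨ IsClosed A) :
    hμ.measure hsub A = μ A := by
  have hA' : MeasurableSet A := hA.elim IsOpen.measurableSet IsClosed.measurableSet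
  rw [measure, toMeasure_apply _ _ hA', hμ.outerMeasure_of_isOpen_or_isClosed hsub hA]

theorem measure_eq_iInf {E : Set X} (hE : MeasurableSet E) :
    hμ.measure hsub E = ⨅ (U : Set X) (_ : IsOpen U ∧ E ⊆ U), hμ.measure hsub U := by
  rw [hμ.measure_apply hsub hE]
  exact iInf_congr fun U => iInf_congr fun hU =>
    (hμ.measure_of_isOpen_or_isClosed hsub (.inl hU.1)).symm

theorem measure_eq_iSup {U : Set X} (hU : IsOpen U) :
    hμ.measure hsub U = ⨆ (K : Set X) (_ : IsCompact K ∧ K ⊆ U), hμ.measure hsub K := by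
  rw [hμ.measure_of_isOpen_or_isClosed hsub (.inl hU), hμ.eq_iSup_of_isOpen hU]
  exact iSup_congr fun K => iSup_congr fun hK =>
    (hμ.measure_of_isOpen_or_isClosed hsub (.inr hK.1.isClosed)).symm

theorem eq_measure_of_outerRegular {m : Measure X}
    (hm : ∀ E : Set X, MeasurableSet E → m E = ⨅ (U : Set X) (_ : IsOpen U ∧ E ⊆ U), m U)
    (hmμ : ∀ U : Set X, IsOpen U → m U = μ U) {E : Set X} (hE : MeasurableSet E) :
    m E = hμ.measure hsub E := by
  rw [hm E hE, hμ.measure_apply hsub hE]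
  exact iInf_congr fun U => iInf_congr fun hU => hmμ U hU.1

end IsDTM

theorem dtm_subadditive_tfae_general
    [TopologicalSpace X] [T2Space X]
    [MeasurableSpace X] [BorelSpace X]
    (μ : Set X → ℝ≥0∞) (hμ : IsDTM μ) :
    ((∀ C K : Set X, IsCompact C → IsCompact K → μ (C ∪ K) ≤ μ C + μ K) ↔
     (∀ U V : Set X, IsOpen U → IsOpen V → μ (U ∪ V) ≤ μ U + μ V)) ∧
    ((∀ U V : Set X, IsOpen U → IsOpen V → μ (U ∪ V) ≤ μ U + μ V) ↔
     (∃ m : Measure X,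
       (∀ E : Set X, MeasurableSet E →
         m E = ⨅ (U : Set X) (_ : IsOpen U ∧ E ⊆ U), m U) ∧
       (∀ U : Set X, IsOpen U →
         m U = ⨆ (K : Set X) (_ : IsCompact K ∧ K ⊆ U), m K) ∧
       (∀ A : Set X, IsOpen A ∨ IsClosed A → m A = μ A) ∧
       (∀ m₂ : Measure X,
         (∀ E : Set X, MeasurableSet E →
           m₂ E = ⨅ (U : Set X) (_ : IsOpen U ∧ E ⊆ U), m₂ U) →
         (∀ U : Set X, IsOpen U →
           m₂ U = ⨆ (K : Set X) (_ : IsCompact K ∧ K ⊆ U), m₂ K) →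
         (∀ A : Set X, IsOpen A ∨ IsClosed A → m₂ A = μ A) →
         ∀ E : Set X, MeasurableSet E → m₂ E = m E))) := by
  refine ⟨⟨fun hsubK _ _ => hμ.union_le_of_isOpen hsubK, fun hsub C K hC hK => ?_⟩,
    ⟨fun hsub => ?_, ?_⟩⟩
  · have hext {A : Set X} (hA : IsClosed A) := hμ.measure_of_isOpen_or_isClosed hsub (.inr hA)
    exact union_le_add_of_measure_eq (hμ.measure hsub) (hext hC.isClosed) (hext hK.isClosed)
      (hext (hC.union hK).isClosed)
  · exact ⟨hμ.measure hsub, fun _ => hμ.measure_eq_iInf hsub, fun _ => hμ.measure_eq_iSup hsub,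
      fun _ => hμ.measure_of_isOpen_or_isClosed hsub, fun m₂ hm₂ _ hm₂μ _ =>
        hμ.eq_measure_of_outerRegular hsub hm₂ fun U hU => hm₂μ U (.inl hU)⟩
  · rintro ⟨m, -, -, hmμ, -⟩ U V hU hV
    exact union_le_add_of_measure_eq m (hmμ U (.inl hU)) (hmμ V (.inl hV))
      (hmμ _ (.inl (hU.union hV)))

/-- Theorem 4.8: for a deficient topological measure `μ` on a locally compact Hausdorff
space, the following are equivalent: (a) `μ(C ∪ K) ≤ μ(C) + μ(K)` for all compact `C, K`;
(b) `μ(U ∪ V) ≤ μ(U) + μ(V)` for all open `U, V`; (c) `μ` admits a unique extension to a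
Borel measure that is outer regular on all Borel sets and inner compact regular on open sets
and agrees with `μ` on open and closed sets. -/
theorem dtm_subadditive_tfae
    [TopologicalSpace X] [LocallyCompactSpace X] [T2Space X]
    [MeasurableSpace X] [BorelSpace X]
    (μ : Set X → ℝ≥0∞) (hμ : IsDTM μ) :
    ((∀ C K : Set X, IsCompact C → IsCompact K → μ (C ∪ K) ≤ μ C + μ K) ↔
     (∀ U V : Set X, IsOpen U → IsOpen V → μ (U ∪ V) ≤ μ U + μ V)) ∧
    ((∀ U V : Set X, IsOpen U → IsOpen V → μ (U ∪ V) ≤ μ U + μ V) ↔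
     (∃ m : Measure X,
       (∀ E : Set X, MeasurableSet E →
         m E = ⨅ (U : Set X) (_ : IsOpen U ∧ E ⊆ U), m U) ∧
       (∀ U : Set X, IsOpen U →
         m U = ⨆ (K : Set X) (_ : IsCompact K ∧ K ⊆ U), m K) ∧
       (∀ A : Set X, IsOpen A ∨ IsClosed A → m A = μ A) ∧
       (∀ m₂ : Measure X,
         (∀ E : Set X, MeasurableSet E →
           m₂ E = ⨅ (U : Set X) (_ : IsOpen U ∧ E ⊆ U), m₂ U) →
         (∀ U : Set X, IsOpen U →
           m₂ U = ⨆ (K : Set X) (_ : IsCompact K ∧ K ⊆ U), m₂ K) →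
         (∀ A : Set X, IsOpen A ∨ IsClosed A → m₂ A = μ A) →
         ∀ E : Set X, MeasurableSet E → m₂ E = m E))) :=
  dtm_subadditive_tfae_general μ hμ
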